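/- Suppose (A,B) has the FGM distribution with parameter θ, w < 1, and the rewarding rule is (x=0, y=0, z=w). Then an agent with period-1 cost c performs in period 1 (planning to perform again if his period-2 cost is ≤ w) if and only if c ≤ c₁*(θ) := (1/2)·(3w² + 3θw² − 2θw³)/(3 + 3θw² − 2θw³), i.e., −c + ∫₀^w (w − k) g_c(k) dk ≥ 0 iff c ≤ c₁*(θ). Moreover c₁*(θ) < 1/2 and c₁* is increasing in θ on [−1,1]. -/

import Mathlib

open intervalIntegral

noncomputable def fgmCondDensity (θ c k : ℝ) : ℝ := 1 + θ * (1 - 2 * c) * (1 - 2 * k)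

/-- Period-1 performance threshold under rule `(0, 0, w)` with `w < 1`. -/
noncomputable def c1star (w θ : ℝ) : ℝ :=
  (1/2) * (3 * w ^ 2 + 3 * θ * w ^ 2 - 2 * θ * w ^ 3) / (3 + 3 * θ * w ^ 2 - 2 * θ * w ^ 3)

lemma fgm_integral (w θ c : ℝ) :
    (∫ k in (0:ℝ)..w, (w - k) * fgmCondDensity θ c k)
      = w ^ 2 / 2 + θ * (1 - 2 * c) * (w ^ 2 / 2 - w ^ 3 / 3) := by
  have hderiv : ∀ x ∈ Set.uIcc (0:ℝ) w,
      HasDerivAt (fun k : ℝ => w * k - k ^ 2 / 2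
        + θ * (1 - 2 * c) * (w * k - (1 + 2 * w) * k ^ 2 / 2 + 2 * k ^ 3 / 3))
        ((w - x) * fgmCondDensity θ c x) x := by
    intro x _
    have hk1 : HasDerivAt (fun k : ℝ => k) 1 x := hasDerivAt_id x
    have hk2 : HasDerivAt (fun k : ℝ => k ^ 2) (2 * x) x := by
      simpa using hasDerivAt_pow 2 x
    have hk3 : HasDerivAt (fun k : ℝ => k ^ 3) (3 * x ^ 2) x := by
      simpa using hasDerivAt_pow 3 x
    have h := ((hk1.const_mul w).sub (hk2.div_const 2)).add
      ((((hk1.const_mul w).sub ((hk2.const_mul (1 + 2 * w)).div_const 2)).add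
        ((hk3.const_mul 2).div_const 3)).const_mul (θ * (1 - 2 * c)))
    refine h.congr_deriv ?_
    unfold fgmCondDensity
    ring
  have hcont : IntervalIntegrable (fun k => (w - k) * fgmCondDensity θ c k)
      MeasureTheory.volume 0 w := by
    apply Continuous.intervalIntegrable
    unfold fgmCondDensity
    continuity
  rw [intervalIntegral.integral_eq_sub_of_hasDerivAt hderiv hcont]
  ring

/-- Under the FGM distribution with parameter `θ`, `0 < w < 1`, and rule
`(x=0, y=0, z=w)`, an agent with period-1 cost `c` performs in period 1 iff
`−c + ∫₀^w (w − k) g_c(k) dk ≥ 0`, which holds iff `c ≤ c₁*(θ)`; moreover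
`c₁*(θ) < 1/2` and `c₁*` is increasing in `θ` on `[−1,1]`. -/
theorem stmt_12 (w : ℝ) (hw0 : 0 < w) (hw1 : w < 1) :
    (∀ θ ∈ Set.Icc (-1:ℝ) 1, ∀ c ∈ Set.Icc (0:ℝ) 1,
      (-c + ∫ k in (0:ℝ)..w, (w - k) * fgmCondDensity θ c k) ≥ 0 ↔ c ≤ c1star w θ) ∧
    (∀ θ ∈ Set.Icc (-1:ℝ) 1, c1star w θ < 1/2) ∧
    MonotoneOn (fun θ => c1star w θ) (Set.Icc (-1:ℝ) 1) := by
  have hD : ∀ θ ∈ Set.Icc (-1:ℝ) 1, (0:ℝ) < 3 + 3 * θ * w ^ 2 - 2 * θ * w ^ 3 := by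
    rintro θ ⟨h1, h2⟩
    have ha : (0:ℝ) < 3 * w ^ 2 - 2 * w ^ 3 := by nlinarith [mul_pos hw0 hw0]
    have ha3 : 3 * w ^ 2 - 2 * w ^ 3 < 3 := by nlinarith [mul_pos hw0 hw0]
    nlinarith [mul_nonneg (by linarith : (0:ℝ) ≤ θ + 1) ha.le]
  refine ⟨?_, ?_, ?_⟩
  · rintro θ hθ c hc
    have hDθ := hD θ hθ
    rw [fgm_integral]
    unfold c1star
    constructor
    · intro h
      rw [ge_iff_le] at h
      rw [le_div_iff₀ hDθ]
      nlinarith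
    · intro h
      rw [le_div_iff₀ hDθ] at h
      nlinarith
  · rintro θ hθ
    have hDθ := hD θ hθ
    unfold c1star
    rw [div_lt_iff₀ hDθ]
    nlinarith
  · rintro θ₁ hθ₁ θ₂ hθ₂ h
    have hD1 := hD θ₁ hθ₁
    have hD2 := hD θ₂ hθ₂
    simp only
    unfold c1star
    rw [div_le_div_iff₀ hD1 hD2]
    have ha : (0:ℝ) < 3 * w ^ 2 - 2 * w ^ 3 := by nlinarith [mul_pos hw0 hw0]
    have hw2 : (0:ℝ) ≤ 1 - w ^ 2 := by nlinarith
    nlinarith [mul_nonneg (mul_nonneg (sub_nonneg.2 h) ha.le) hw2]
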